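/- Fix a positive integer n. For each s > 0 let (λ_i(s))_{i≥0} be a sequence with 0 < λ_i(s) < 1 for all i, nonincreasing in i, with ∑_{i=0}^∞ λ_i(s) = s, and suppose that for each fixed i, lim_{s→∞} (1 − λ_i(s)) · i! · e^{πs} / ( π^{i+1} 2^{2i+3/2} s^{i+1/2} ) = 1. Then lim_{s→∞} [ ∑_{i_1<⋯<i_n} ∏_{j=1}^n λ_{i_j}(s)/(1 − λ_{i_j}(s)) ] · s^{n²/2} e^{−nπs} = 1!·2!·⋯·(n−1)! · π^{−n(n+1)/2} · 2^{−n² − n/2}. -/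

import Mathlib

/-!
Write `xᵢ = λᵢ/(1 - λᵢ)` and `eₙ(x) = ∑_{|t| = n} ∏_{i ∈ t} xᵢ`. Fuchs's formula says
`xᵢ(s) ∼ 1/(cᵢ wᵢ(s))` with `wᵢ(s) = s^{i+1/2} e^{-πs}`, and `∏_{j<n} wⱼ = s^{n²/2} e^{-nπs}`,
so the single term `∏_{j<n} xⱼ` of `eₙ` (from `t = {0, …, n-1}`) already has the claimed
asymptotics. Every other `n`-set has largest element `a ≥ n`; removing it shows
`eₙ ≤ ∏_{j<n} xⱼ + (∑_{a ≥ n} xₐ) eₙ₋₁`, and since `λ` is nonincreasing with sum `s`, the tail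
`∑_{a ≥ n} xₐ ≤ xₙ + s/(1 - λₙ₊₁)` is `o(1/wₙ₋₁)`. By induction on `n` the other terms are
negligible.
-/

open Real Filter Finset Topology
open scoped Nat ENNReal

noncomputable def seqEsymm {R : Type*} [CommSemiring R] [TopologicalSpace R] (x : ℕ → R)
    (n : ℕ) : R :=
  ∑' t : {t : Finset ℕ // t.card = n}, ∏ i ∈ (t : Finset ℕ), x i

theorem seqEsymm_zero {R : Type*} [CommSemiring R] [TopologicalSpace R] [T2Space R]
    (x : ℕ → R) : seqEsymm x 0 = 1 :=
  (tsum_eq_single ⟨∅, card_empty⟩ fun t ht => (ht (Subtype.ext (card_eq_zero.1 t.2))).elim).trans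
    prod_empty

theorem Finset.succ_le_max'_of_ne_range {t : Finset ℕ} {n : ℕ} (ht : t.card = n + 1)
    (hne : t ≠ range (n + 1)) (h : t.Nonempty) : n + 1 ≤ t.max' h := by
  by_contra! hlt
  refine hne (eq_of_subset_of_card_le (fun a ha => mem_range.2 ?_) (by simp [ht]))
  exact (le_max' t a ha).trans_lt hlt

theorem ENNReal.prod_range_le_seqEsymm (x : ℕ → ℝ≥0∞) (n : ℕ) :
    ∏ j ∈ range n, x j ≤ seqEsymm x n :=
  ENNReal.le_tsum (f := fun t : {t : Finset ℕ // t.card = n} => ∏ i ∈ (t : Finset ℕ), x i)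
    ⟨range n, card_range n⟩

/-- Removing its largest element `a ≥ n + 1` from any `(n+1)`-set other than `{0, …, n}`
leaves an `n`-set, and `t ↦ (max t, t \ {max t})` is injective. -/
theorem ENNReal.seqEsymm_succ_le (x : ℕ → ℝ≥0∞) (n : ℕ) :
    seqEsymm x (n + 1) ≤
      ∏ j ∈ range (n + 1), x j + (∑' a, (Set.Ici (n + 1)).indicator x a) * seqEsymm x n := by
  classical
  let f (t : {t : Finset ℕ // t.card = n + 1}) : ℝ≥0∞ := ∏ i ∈ (t : Finset ℕ), x i
  let t₀ : {t : Finset ℕ // t.card = n + 1} := ⟨range (n + 1), card_range _⟩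
  have hne (t : {t : Finset ℕ // t.card = n + 1}) : t.1.Nonempty :=
    card_pos.1 (by rw [t.2]; exact n.succ_pos)
  let peel (t : {t : Finset ℕ // t.card = n + 1}) : ℕ × {t : Finset ℕ // t.card = n} :=
    (t.1.max' (hne t), ⟨t.1.erase (t.1.max' (hne t)), by
      rw [card_erase_of_mem (max'_mem _ _), t.2, Nat.add_sub_cancel]⟩)
  have hpeel : Function.Injective peel := by
    intro t t' h
    simp only [peel, Prod.mk.injEq, Subtype.mk.injEq] at h
    apply Subtype.ext
    rw [← insert_erase (max'_mem t.1 (hne t)), ← insert_erase (max'_mem t'.1 (hne t')), h.2, h.1]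
  let G (p : ℕ × {t : Finset ℕ // t.card = n}) : ℝ≥0∞ :=
    (Set.Ici (n + 1)).indicator x p.1 * ∏ i ∈ (p.2 : Finset ℕ), x i
  have hfG (t) : f t ≤ (if t = t₀ then f t₀ else 0) + G (peel t) := by
    by_cases ht : t = t₀
    · subst ht
      simp
    · have hmax := succ_le_max'_of_ne_range t.2 (fun h => ht (Subtype.ext h)) (hne t)
      rw [if_neg ht, zero_add]
      dsimp only [f, G, peel]
      rw [Set.indicator_of_mem (Set.mem_Ici.2 hmax), mul_prod_erase _ _ (max'_mem _ _)]
  calc seqEsymm x (n + 1) ≤ ∑' t, ((if t = t₀ then f t₀ else 0) + G (peel t)) :=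
        ENNReal.tsum_le_tsum hfG
    _ ≤ f t₀ + ∑' p, G p := by
      rw [ENNReal.tsum_add, tsum_ite_eq]
      gcongr
      exact ENNReal.tsum_comp_le_tsum_of_injective hpeel G
    _ = _ := by
      rw [ENNReal.tsum_prod']
      simp only [G, ENNReal.tsum_mul_left, ENNReal.tsum_mul_right]
      rfl

theorem ENNReal.seqEsymm_ne_top {x : ℕ → ℝ≥0∞} (hx : ∑' i, x i ≠ ∞) (n : ℕ) :
    seqEsymm x n ≠ ∞ := by
  induction n with
  | zero => simp [seqEsymm_zero]
  | succ n ih =>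
    refine ne_top_of_le_ne_top ?_ (ENNReal.seqEsymm_succ_le x n)
    have hprod : ∏ j ∈ range (n + 1), x j ≠ ∞ :=
      ENNReal.prod_ne_top fun j _ => ne_top_of_le_ne_top hx (ENNReal.le_tsum j)
    have htail : ∑' a, (Set.Ici (n + 1)).indicator x a ≠ ∞ :=
      ne_top_of_le_ne_top hx (ENNReal.tsum_le_tsum (Set.indicator_le_self _ x))
    exact ENNReal.add_ne_top.2 ⟨hprod, ENNReal.mul_ne_top htail ih⟩

theorem seqEsymm_ofReal {x : ℕ → ℝ} (hx : 0 ≤ x) (hs : Summable x) (n : ℕ) :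
    seqEsymm (fun i => ENNReal.ofReal (x i)) n = ENNReal.ofReal (seqEsymm x n) := by
  have hfin : seqEsymm (fun i => ENNReal.ofReal (x i)) n ≠ ∞ := by
    refine ENNReal.seqEsymm_ne_top ?_ n
    rw [← ENNReal.ofReal_tsum_of_nonneg hx hs]
    exact ENNReal.ofReal_ne_top
  rw [← ENNReal.ofReal_toReal hfin, seqEsymm, seqEsymm, ENNReal.tsum_toReal_eq fun t => ?_]
  · simp [ENNReal.toReal_prod, ENNReal.toReal_ofReal (hx _)]
  · exact ENNReal.prod_ne_top fun i _ => ENNReal.ofReal_ne_top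

theorem seqEsymm_nonneg {x : ℕ → ℝ} (hx : 0 ≤ x) (n : ℕ) : 0 ≤ seqEsymm x n :=
  tsum_nonneg fun _ => prod_nonneg fun i _ => hx i

theorem prod_range_le_seqEsymm {x : ℕ → ℝ} (hx : 0 ≤ x) (hs : Summable x) (n : ℕ) :
    ∏ j ∈ range n, x j ≤ seqEsymm x n := by
  rw [← ENNReal.ofReal_le_ofReal_iff (seqEsymm_nonneg hx n),
    ← seqEsymm_ofReal hx hs, ENNReal.ofReal_prod_of_nonneg fun i _ => hx i]
  exact ENNReal.prod_range_le_seqEsymm _ n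

theorem seqEsymm_succ_le {x : ℕ → ℝ} (hx : 0 ≤ x) (hs : Summable x) (n : ℕ) :
    seqEsymm x (n + 1) ≤
      ∏ j ∈ range (n + 1), x j + (∑' a, (Set.Ici (n + 1)).indicator x a) * seqEsymm x n := by
  have hind : 0 ≤ (Set.Ici (n + 1)).indicator x := Set.indicator_nonneg fun i _ => hx i
  have hprod : 0 ≤ ∏ j ∈ range (n + 1), x j := prod_nonneg fun i _ => hx i
  have htail : 0 ≤ (∑' a, (Set.Ici (n + 1)).indicator x a) * seqEsymm x n :=
    mul_nonneg (tsum_nonneg hind) (seqEsymm_nonneg hx n)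
  rw [← ENNReal.ofReal_le_ofReal_iff (add_nonneg hprod htail), ENNReal.ofReal_add hprod htail,
    ENNReal.ofReal_mul (tsum_nonneg hind), ENNReal.ofReal_tsum_of_nonneg hind (hs.indicator _),
    ← seqEsymm_ofReal hx hs, ← seqEsymm_ofReal hx hs, ENNReal.ofReal_prod_of_nonneg fun i _ => hx i]
  convert ENNReal.seqEsymm_succ_le (fun i => ENNReal.ofReal (x i)) n using 4
  exact (Set.indicator_comp_of_zero ENNReal.ofReal_zero).symm

theorem div_one_sub_le_div_one_sub {μ : ℕ → ℝ} (h0 : 0 ≤ μ) (h1 : ∀ i, μ i < 1)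
    (hμ : Antitone μ) {k a : ℕ} (hka : k ≤ a) : μ a / (1 - μ a) ≤ μ a / (1 - μ k) :=
  div_le_div_of_nonneg_left (h0 a) (sub_pos.2 (h1 k)) (by linarith [hμ hka])

theorem summable_div_one_sub {μ : ℕ → ℝ} (h0 : 0 ≤ μ) (h1 : ∀ i, μ i < 1) (hμ : Antitone μ)
    (hs : Summable μ) : Summable fun a => μ a / (1 - μ a) :=
  (hs.div_const (1 - μ 0)).of_nonneg_of_le (fun a => div_nonneg (h0 a) (sub_pos.2 (h1 a)).le)
    fun a => div_one_sub_le_div_one_sub h0 h1 hμ (Nat.zero_le a)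

theorem tsum_indicator_div_one_sub_le {μ : ℕ → ℝ} {S : ℝ} (h0 : 0 ≤ μ) (h1 : ∀ i, μ i < 1)
    (hμ : Antitone μ) (hS : HasSum μ S) (m : ℕ) :
    ∑' a, (Set.Ici m).indicator (fun a => μ a / (1 - μ a)) a ≤
      μ m / (1 - μ m) + S / (1 - μ (m + 1)) := by
  classical
  have hle (a : ℕ) : (Set.Ici m).indicator (fun a => μ a / (1 - μ a)) a ≤
      (if a = m then μ m / (1 - μ m) else 0) + μ a / (1 - μ (m + 1)) := by
    have hrest : 0 ≤ μ a / (1 - μ (m + 1)) := div_nonneg (h0 a) (sub_pos.2 (h1 _)).le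
    rcases lt_trichotomy a m with ham | rfl | ham
    · simp [Set.indicator_of_notMem (Set.notMem_Ici.2 ham), ham.ne, hrest]
    · simp [hrest]
    · rw [Set.indicator_of_mem (Set.mem_Ici.2 ham.le), if_neg ham.ne', zero_add]
      exact div_one_sub_le_div_one_sub h0 h1 hμ ham
  have hsingle : Summable fun a => if a = m then μ m / (1 - μ m) else 0 :=
    summable_of_ne_finset_zero (s := {m}) (by simp +contextual)
  calc _ ≤ ∑' a, ((if a = m then μ m / (1 - μ m) else 0) + μ a / (1 - μ (m + 1))) :=
        ((summable_div_one_sub h0 h1 hμ hS.summable).indicator _).tsum_le_tsum hle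
          (hsingle.add (hS.div_const _).summable)
    _ = _ := by
      rw [hsingle.tsum_add (hS.div_const _).summable, tsum_ite_eq, (hS.div_const _).tsum_eq]

theorem tendsto_div_one_sub_mul {α 𝕜 : Type*} [NormedField 𝕜] {l : Filter α} {u w : α → 𝕜}
    {c : 𝕜} (hc : c ≠ 0) (hw : Tendsto w l (𝓝 0))
    (h : Tendsto (fun a => (1 - u a) / w a) l (𝓝 c)) :
    Tendsto (fun a => u a / (1 - u a) * w a) l (𝓝 c⁻¹) := by
  have hw0 : ∀ᶠ a in l, w a ≠ 0 :=
    (h.eventually_ne hc).mono fun a ha => (div_ne_zero_iff.1 ha).2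
  have hu : Tendsto (fun a => 1 - u a) l (𝓝 0) := by
    refine (mul_zero c ▸ h.mul hw).congr' (hw0.mono fun a ha => ?_)
    exact div_mul_cancel₀ _ ha
  have hu : Tendsto u l (𝓝 1) := by
    simpa using (tendsto_const_nhds (x := (1 : 𝕜))).sub hu
  rw [← one_div]
  refine (hu.div h hc).congr fun a => ?_
  rw [Pi.div_apply, div_div_eq_mul_div, div_mul_eq_mul_div]

-- Fuchs's formula reads `1 - λᵢ(s) ∼ fuchsConst i * fuchsScale i s`.
noncomputable def fuchsScale (i : ℕ) (s : ℝ) : ℝ := s ^ ((i : ℝ) + 1 / 2) * exp (-(π * s))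

noncomputable def fuchsConst (i : ℕ) : ℝ := π ^ (i + 1) * (2 : ℝ) ^ ((2 * i : ℝ) + 3 / 2) / i !

-- The paper's result reads `r₂(n;s) ∼ r2Const n / r2Scale n s`, with `r2Const n = B_{2,n}`.
noncomputable def r2Scale (n : ℕ) (s : ℝ) : ℝ := s ^ ((n ^ 2 : ℝ) / 2) * exp (-(n * π * s))

noncomputable def r2Const (n : ℕ) : ℝ :=
  (∏ j ∈ range n, (j ! : ℝ)) * π ^ (-((n * (n + 1) : ℝ)) / 2) * (2 : ℝ) ^ (-((n ^ 2 : ℝ)) - n / 2)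

theorem fuchsConst_pos (i : ℕ) : 0 < fuchsConst i := by
  unfold fuchsConst
  have := pi_pos
  positivity

theorem fuchsScale_pos (i : ℕ) {s : ℝ} (hs : 0 < s) : 0 < fuchsScale i s := by
  unfold fuchsScale
  positivity

theorem fuchsScale_succ (i : ℕ) {s : ℝ} (hs : 0 < s) :
    fuchsScale (i + 1) s = s * fuchsScale i s := by
  rw [fuchsScale, fuchsScale, ← mul_assoc, ← rpow_one_add' hs.le (by positivity)]
  push_cast
  ring_nf

theorem tendsto_fuchsScale_atTop (i : ℕ) : Tendsto (fuchsScale i) atTop (𝓝 0) :=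
  (tendsto_rpow_mul_exp_neg_mul_atTop_nhds_zero _ π pi_pos).congr fun s => by
    rw [fuchsScale, neg_mul]

theorem r2Scale_zero (s : ℝ) : r2Scale 0 s = 1 := by simp [r2Scale]

theorem r2Scale_nonneg (n : ℕ) {s : ℝ} (hs : 0 ≤ s) : 0 ≤ r2Scale n s := by
  unfold r2Scale
  positivity

theorem r2Scale_succ (n : ℕ) {s : ℝ} (hs : 0 < s) :
    r2Scale (n + 1) s = r2Scale n s * fuchsScale n s := by
  rw [r2Scale, r2Scale, fuchsScale, mul_mul_mul_comm, ← rpow_add hs, ← exp_add]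
  push_cast
  ring_nf

theorem r2Const_zero : r2Const 0 = 1 := by simp [r2Const]

theorem r2Const_succ (n : ℕ) : r2Const (n + 1) = r2Const n * (fuchsConst n)⁻¹ := by
  have hπ : π ^ (-(((n + 1 : ℕ) : ℝ) * ((n + 1 : ℕ) + 1)) / 2) =
      π ^ (-((n : ℝ) * (n + 1)) / 2) * (π ^ (n + 1))⁻¹ := by
    rw [← rpow_natCast, ← rpow_neg pi_pos.le, ← rpow_add pi_pos]
    push_cast
    ring_nf
  have h2 : (2 : ℝ) ^ (-(((n + 1 : ℕ) : ℝ) ^ 2) - ((n + 1 : ℕ) : ℝ) / 2) =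
      (2 : ℝ) ^ (-((n : ℝ) ^ 2) - n / 2) * ((2 : ℝ) ^ ((2 * n : ℝ) + 3 / 2))⁻¹ := by
    rw [← rpow_neg zero_le_two, ← rpow_add zero_lt_two]
    push_cast
    ring_nf
  rw [r2Const, r2Const, fuchsConst, prod_range_succ, hπ, h2, inv_div]
  ring

theorem tendsto_div_fuchsScale {u : ℝ → ℝ} {i : ℕ}
    (h : Tendsto (fun s : ℝ =>
      u s * (i ! : ℝ) * exp (π * s) / (π ^ (i + 1) * (2 : ℝ) ^ ((2 * i : ℝ) + 3 / 2) *
        s ^ ((i : ℝ) + 1 / 2))) atTop (𝓝 1)) :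
    Tendsto (fun s => u s / fuchsScale i s) atTop (𝓝 (fuchsConst i)) := by
  refine (mul_one (fuchsConst i) ▸ h.const_mul (fuchsConst i)).congr' ?_
  filter_upwards [eventually_gt_atTop 0] with s hs
  have := pi_pos
  rw [fuchsScale, fuchsConst, exp_neg]
  field_simp

/-- Since `fuchsScale (j + 1) s = s * fuchsScale j s`, both terms of the bound on `T` are
`O(1/s)` relative to `1 / fuchsScale i s`. -/
theorem tendsto_tail_mul_fuchsScale {lam : ℝ → ℕ → ℝ} {T : ℝ → ℝ} (i : ℕ)
    (hr : ∀ j, Tendsto (fun s => (1 - lam s j) / fuchsScale j s) atTop (𝓝 (fuchsConst j)))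
    (hT : ∀ᶠ s in atTop,
      0 ≤ T s ∧ T s ≤ lam s (i + 1) / (1 - lam s (i + 1)) + s / (1 - lam s (i + 2))) :
    Tendsto (fun s => T s * fuchsScale i s) atTop (𝓝 0) := by
  have hinv : Tendsto (fun s : ℝ => s⁻¹) atTop (𝓝 0) := tendsto_inv_atTop_zero
  have hnext : Tendsto (fun s => lam s (i + 1) / (1 - lam s (i + 1)) * fuchsScale i s)
      atTop (𝓝 0) := by
    refine (mul_zero (fuchsConst (i + 1))⁻¹ ▸ (tendsto_div_one_sub_mul (fuchsConst_pos _).ne'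
      (tendsto_fuchsScale_atTop _) (hr (i + 1))).mul hinv).congr' ?_
    filter_upwards [eventually_gt_atTop 0] with s hs
    rw [fuchsScale_succ i hs]
    field_simp
  have hrest : Tendsto (fun s => s / (1 - lam s (i + 2)) * fuchsScale i s) atTop (𝓝 0) := by
    refine (mul_zero (fuchsConst (i + 2))⁻¹ ▸
      ((hr (i + 2)).inv₀ (fuchsConst_pos _).ne').mul hinv).congr' ?_
    filter_upwards [eventually_gt_atTop 0] with s hs
    rw [fuchsScale_succ (i + 1) hs, fuchsScale_succ i hs, inv_div]
    field_simp
  refine tendsto_of_tendsto_of_tendsto_of_le_of_le' tendsto_const_nhds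
    (zero_add (0 : ℝ) ▸ hnext.add hrest) ?_ ?_
  · filter_upwards [hT, eventually_gt_atTop 0] with s hTs hs
    exact mul_nonneg hTs.1 (fuchsScale_pos i hs).le
  · filter_upwards [hT, eventually_gt_atTop 0] with s hTs hs
    rw [← add_mul]
    exact mul_le_mul_of_nonneg_right hTs.2 (fuchsScale_pos i hs).le

theorem tendsto_prod_range_mul_r2Scale {x : ℝ → ℕ → ℝ}
    (hxw : ∀ i, Tendsto (fun s => x s i * fuchsScale i s) atTop (𝓝 (fuchsConst i)⁻¹)) (n : ℕ) :
    Tendsto (fun s => (∏ j ∈ range n, x s j) * r2Scale n s) atTop (𝓝 (r2Const n)) := by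
  induction n with
  | zero => simp [r2Scale_zero, r2Const_zero]
  | succ n ih =>
    rw [r2Const_succ]
    refine (ih.mul (hxw n)).congr' ?_
    filter_upwards [eventually_gt_atTop 0] with s hs
    rw [prod_range_succ, r2Scale_succ n hs]
    ring

theorem tendsto_seqEsymm_mul_r2Scale {x : ℝ → ℕ → ℝ}
    (hx : ∀ᶠ s in atTop, 0 ≤ x s ∧ Summable (x s))
    (hxw : ∀ i, Tendsto (fun s => x s i * fuchsScale i s) atTop (𝓝 (fuchsConst i)⁻¹))
    (htail : ∀ i, Tendsto (fun s => (∑' a, (Set.Ici (i + 1)).indicator (x s) a) * fuchsScale i s)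
      atTop (𝓝 0))
    (n : ℕ) : Tendsto (fun s => seqEsymm (x s) n * r2Scale n s) atTop (𝓝 (r2Const n)) := by
  induction n with
  | zero => simp [seqEsymm_zero, r2Scale_zero, r2Const_zero]
  | succ n ih =>
    have hlower := tendsto_prod_range_mul_r2Scale hxw (n + 1)
    have hupper := hlower.add ((htail n).mul ih)
    rw [zero_mul, add_zero] at hupper
    refine tendsto_of_tendsto_of_tendsto_of_le_of_le' hlower hupper ?_ ?_
    · filter_upwards [hx, eventually_gt_atTop 0] with s ⟨hx0, hxs⟩ hs
      exact mul_le_mul_of_nonneg_right (prod_range_le_seqEsymm hx0 hxs _)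
        (r2Scale_nonneg _ hs.le)
    · filter_upwards [hx, eventually_gt_atTop 0] with s ⟨hx0, hxs⟩ hs
      calc seqEsymm (x s) (n + 1) * r2Scale (n + 1) s
          ≤ (∏ j ∈ range (n + 1), x s j +
              (∑' a, (Set.Ici (n + 1)).indicator (x s) a) * seqEsymm (x s) n) *
            r2Scale (n + 1) s :=
            mul_le_mul_of_nonneg_right (seqEsymm_succ_le hx0 hxs n) (r2Scale_nonneg _ hs.le)
        _ = _ := by rw [r2Scale_succ n hs]; ring

theorem r2_asymptotics (n : ℕ)
    (lam : ℝ → ℕ → ℝ)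
    (hpos : ∀ s : ℝ, 0 < s → ∀ i, 0 < lam s i)
    (hlt : ∀ s : ℝ, 0 < s → ∀ i, lam s i < 1)
    (hmono : ∀ s : ℝ, 0 < s → ∀ i j : ℕ, i ≤ j → lam s j ≤ lam s i)
    (htrace : ∀ s : ℝ, 0 < s → HasSum (lam s) s)
    (hfuchs : ∀ i : ℕ,
      Tendsto (fun s : ℝ =>
          (1 - lam s i) * (Nat.factorial i : ℝ) * Real.exp (π * s) /
            (π ^ (i + 1) * (2 : ℝ) ^ ((2 * i : ℝ) + 3 / 2) * s ^ ((i : ℝ) + 1 / 2)))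
        atTop (nhds 1)) :
    Tendsto (fun s : ℝ =>
        (∑' t : {t : Finset ℕ // t.card = n}, ∏ i ∈ (t : Finset ℕ), lam s i / (1 - lam s i))
          * s ^ ((n ^ 2 : ℝ) / 2) * Real.exp (-(n * π * s)))
      atTop
      (nhds ((∏ j ∈ Finset.range n, (Nat.factorial j : ℝ))
        * π ^ (-((n * (n + 1) : ℝ)) / 2) * (2 : ℝ) ^ (-((n ^ 2 : ℝ)) - n / 2))) := by
  have hr (i : ℕ) := tendsto_div_fuchsScale (hfuchs i)
  have hlam : ∀ᶠ s in atTop,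
      0 ≤ lam s ∧ (∀ i, lam s i < 1) ∧ Antitone (lam s) ∧ HasSum (lam s) s :=
    (eventually_gt_atTop 0).mono fun s hs =>
      ⟨fun i => (hpos s hs i).le, hlt s hs, fun i j => hmono s hs i j, htrace s hs⟩
  have hx : ∀ᶠ s in atTop, 0 ≤ (fun i => lam s i / (1 - lam s i)) ∧
      Summable fun i => lam s i / (1 - lam s i) :=
    hlam.mono fun s ⟨h0, h1, hμ, hS⟩ =>
      ⟨fun i => div_nonneg (h0 i) (sub_pos.2 (h1 i)).le,
        summable_div_one_sub h0 h1 hμ hS.summable⟩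
  have htail (i : ℕ) := tendsto_tail_mul_fuchsScale i hr <| hlam.mono fun s ⟨h0, h1, hμ, hS⟩ =>
    ⟨tsum_nonneg (Set.indicator_nonneg fun a _ => div_nonneg (h0 a) (sub_pos.2 (h1 a)).le),
      tsum_indicator_div_one_sub_le h0 h1 hμ hS (i + 1)⟩
  exact (tendsto_seqEsymm_mul_r2Scale hx
    (fun i => tendsto_div_one_sub_mul (fuchsConst_pos i).ne' (tendsto_fuchsScale_atTop i) (hr i))
    htail n).congr fun s => (mul_assoc _ _ _).symm
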